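/- Let C and C' be stitchable Boolean circuits with tree decompositions T and T' having the same skeleton via bijection ψ. Assume that for every input gate g of C' and every bag b of T' with g ∈ dom(b), we have g ∈ dom(ψ⁻¹(b)). Then T + T' (pointwise union of corresponding bags) is a tree decomposition of the stitched circuit C ∘ C'. -/
import Mathlib


open scoped Classical

/-- The type of a gate in a Boolean circuit. -/
inductive GateType : Type
  | inp | not | and | or
deriving DecidableEq

/-- A Boolean circuit over an ambient gate universe `U`: a gate set `G`, wires
`W g' g` (from `g'` into `g`), a distinguished output gate, and gate types. -/
structure Circ (U : Type) where
  G : Set U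
  W : U → U → Prop
  out : U
  μ : U → GateType

/-- The input gates of a circuit. -/
def Circ.Inputs {U : Type} (C : Circ U) : Set U := {g ∈ C.G | C.μ g = .inp}

/-- `C` and `C'` are stitchable: their shared gates are exactly the input gates of `C'`. -/
def Stitchable {U : Type} (C C' : Circ U) : Prop := C.G ∩ C'.G = C'.Inputs

/-- The stitching `C ∘ C'`: union of gates and wires, output gate of `C'`, gate types
following `C` on its gates and `C'` elsewhere. -/
noncomputable def stitch {U : Type} (C C' : Circ U) : Circ U where
  G := C.G ∪ C'.G
  W := fun a b => C.W a b ∨ C'.W a b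
  out := C'.out
  μ := fun g => if g ∈ C.G then C.μ g else C'.μ g

/-- `f` is an evaluation of the circuit `C` under input valuation `ν`. -/
def IsEvalOn {U : Type} (C : Circ U) (ν : U → Bool) (f : U → Bool) : Prop :=
  (∀ g ∈ C.G, C.μ g = .inp → f g = ν g) ∧
  (∀ g ∈ C.G, C.μ g = .not → ∀ g', C.W g' g → f g = !(f g')) ∧
  (∀ g ∈ C.G, C.μ g = .and → (f g = true ↔ ∀ g', C.W g' g → f g' = true)) ∧
  (∀ g ∈ C.G, C.μ g = .or → (f g = true ↔ ∃ g', C.W g' g ∧ f g' = true))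
/-- `IsCircDecomp C E B`: the tree `E` with bags `B` is a tree decomposition of the
relational encoding of the circuit `C`: `E` is a tree, each gate together with its
input gates is covered by some bag, and the bags containing any given gate form a
connected subtree. -/
def IsCircDecomp {U ι : Type} (C : Circ U) (E : SimpleGraph ι) (B : ι → Finset U) :
    Prop :=
  E.IsTree ∧
  (∀ g ∈ C.G, ∃ i, g ∈ B i ∧ ∀ g', C.W g' g → g' ∈ B i) ∧
  (∀ u : U, (E.induce {i | u ∈ B i}).Preconnected)

/-- Let `C` and `C'` be stitchable circuits with tree decompositions over the same
skeleton `E` (so `ψ` is the identity), with bags `B` and `B'` consisting of gates of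
`C` resp. `C'`. If every input gate of `C'` appearing in a bag `B' i` also appears in
the corresponding bag `B i`, then the sum decomposition (pointwise union of bags) is a
tree decomposition of the stitched circuit `C ∘ C'`. -/
theorem sum_decomposition_of_stitching {U ι : Type} [DecidableEq U]
    (C C' : Circ U) (hS : Stitchable C C')
    (hWC : ∀ a b, C.W a b → a ∈ C.G ∧ b ∈ C.G)
    (hWC' : ∀ a b, C'.W a b → a ∈ C'.G ∧ b ∈ C'.G)
    (hinp : ∀ g, C'.μ g = .inp → ∀ g', ¬ C'.W g' g)
    (E : SimpleGraph ι) (B B' : ι → Finset U)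
    (hB : IsCircDecomp C E B) (hB' : IsCircDecomp C' E B')
    (hBsub : ∀ i, (↑(B i) : Set U) ⊆ C.G) (hB'sub : ∀ i, (↑(B' i) : Set U) ⊆ C'.G)
    (hcond : ∀ g ∈ C'.Inputs, ∀ i, g ∈ B' i → g ∈ B i) :
    IsCircDecomp (stitch C C') E (fun i => B i ∪ B' i) := by
  obtain ⟨htree, hcov, hconn⟩ := hB
  obtain ⟨_, hcov', hconn'⟩ := hB'
  refine ⟨htree, ?_, ?_⟩
  · intro g hg
    by_cases hgC : g ∈ C.G
    · obtain ⟨i, hgi, hwi⟩ := hcov g hgC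
      refine ⟨i, Finset.mem_union_left _ hgi, ?_⟩
      rintro g' (h | h)
      · exact Finset.mem_union_left _ (hwi g' h)
      · exfalso
        have hg'' : g ∈ C'.G := (hWC' g' g h).2
        have hmem : g ∈ C'.Inputs := by rw [← hS]; exact ⟨hgC, hg''⟩
        exact hinp g hmem.2 g' h
    · have hg' : g ∈ C'.G := hg.resolve_left hgC
      obtain ⟨i, hgi, hwi⟩ := hcov' g hg'
      refine ⟨i, Finset.mem_union_right _ hgi, ?_⟩
      rintro g'' (h | h)
      · exact absurd (hWC g'' g h).2 hgC
      · exact Finset.mem_union_right _ (hwi g'' h)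
  · intro u
    by_cases huC : u ∈ C.G
    · by_cases huC' : u ∈ C'.G
      · have hu : u ∈ C'.Inputs := by rw [← hS]; exact ⟨huC, huC'⟩
        have hset : {i | u ∈ B i ∪ B' i} = {i | u ∈ B i} := by
          ext i
          simp only [Set.mem_setOf_eq, Finset.mem_union]
          exact ⟨fun h => h.elim id (fun h => hcond u hu i h), Or.inl⟩
        show (E.induce {i | u ∈ B i ∪ B' i}).Preconnected
        rw [hset]; exact hconn u
      · have hset : {i | u ∈ B i ∪ B' i} = {i | u ∈ B i} := by
          ext i
          simp only [Set.mem_setOf_eq, Finset.mem_union]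
          exact ⟨fun h => h.elim id (fun h => absurd (hB'sub i h) huC'), Or.inl⟩
        show (E.induce {i | u ∈ B i ∪ B' i}).Preconnected
        rw [hset]; exact hconn u
    · have hset : {i | u ∈ B i ∪ B' i} = {i | u ∈ B' i} := by
        ext i
        simp only [Set.mem_setOf_eq, Finset.mem_union]
        exact ⟨fun h => h.elim (fun h => absurd (hBsub i h) huC) id, Or.inr⟩
      show (E.induce {i | u ∈ B i ∪ B' i}).Preconnected
      rw [hset]; exact hconn' u
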